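/- arXiv:2312.12138 — 2 statements merged into one kernel-verified Lean document; each statement's English description precedes it below -/
import Mathlib

section
/- For complexes X and Y in an additive category 𝔞, with Y bounded-above, the Hom group in the Verdier quotient K(𝔞)/K^b(𝔞) from X to Y is naturally isomorphic to the colimit over n → ∞ of Hom_{K(𝔞)}(X, σ_{≤ -n}(Y)), where the structure maps are induced by the projections σ_{≤ -n}(Y) → σ_{≤ -(n+1)}(Y). -/
open CategoryTheory Limits ZeroObject

section Brutal

variable {C : Type*} [Category C] [Preadditive C] [HasZeroObject C]

/-- The brutal truncation `σ_{≥ n} X` of a cochain complex. -/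
noncomputable def truncGE (X : CochainComplex C ℤ) (n : ℤ) : CochainComplex C ℤ :=
  CochainComplex.of (fun i => if n ≤ i then X.X i else 0)
    (fun i =>
      if hi : n ≤ i then
        eqToHom (if_pos hi) ≫ X.d i (i + 1) ≫ eqToHom (if_pos (by omega : n ≤ i + 1)).symm
      else 0)
    (fun i => by
      try dsimp only
      by_cases hi : n ≤ i
      · rw [dif_pos hi, dif_pos (show n ≤ i + 1 by omega)]; simp
      · rw [dif_neg hi]; simp)

lemma truncGE_X (X : CochainComplex C ℤ) (n i : ℤ) :
    (truncGE X n).X i = if n ≤ i then X.X i else 0 := rfl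

lemma truncGE_d (X : CochainComplex C ℤ) (n i : ℤ) :
    (truncGE X n).d i (i + 1) =
      if hi : n ≤ i then
        eqToHom (if_pos hi) ≫ X.d i (i + 1) ≫ eqToHom (if_pos (by omega : n ≤ i + 1)).symm
      else 0 :=
  by first | (unfold truncGE; apply CochainComplex.of_d) | simp only [truncGE, CochainComplex.of_d]

/-- The brutal truncation `σ_{≤ n} X` of a cochain complex. -/
noncomputable def truncLE (X : CochainComplex C ℤ) (n : ℤ) : CochainComplex C ℤ :=
  CochainComplex.of (fun i => if i ≤ n then X.X i else 0)
    (fun i =>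
      if hj : i + 1 ≤ n then
        eqToHom (if_pos (by omega : i ≤ n)) ≫ X.d i (i + 1) ≫ eqToHom (if_pos hj).symm
      else 0)
    (fun i => by
      try dsimp only
      by_cases hj : i + 1 + 1 ≤ n
      · rw [dif_pos (show i + 1 ≤ n by omega), dif_pos hj]; simp
      · rw [dif_neg hj]; simp)

lemma truncLE_X (X : CochainComplex C ℤ) (n i : ℤ) :
    (truncLE X n).X i = if i ≤ n then X.X i else 0 := rfl

lemma truncLE_d (X : CochainComplex C ℤ) (n i : ℤ) :
    (truncLE X n).d i (i + 1) =
      if hj : i + 1 ≤ n then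
        eqToHom (if_pos (by omega : i ≤ n)) ≫ X.d i (i + 1) ≫ eqToHom (if_pos hj).symm
      else 0 :=
  by first | (unfold truncLE; apply CochainComplex.of_d) | simp only [truncLE, CochainComplex.of_d]

/-- The canonical inclusion `σ_{≥ n} X ⟶ X`. -/
noncomputable def truncGEι (X : CochainComplex C ℤ) (n : ℤ) : truncGE X n ⟶ X where
  f i := if hi : n ≤ i then eqToHom ((truncGE_X X n i).trans (if_pos hi)) else 0
  comm' := by
    rintro i j (rfl : i + 1 = j)
    try dsimp only
    rw [truncGE_d]
    by_cases hi : n ≤ i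
    · rw [dif_pos hi, dif_pos hi, dif_pos (show n ≤ i + 1 by omega)]
      erw [Category.assoc, Category.assoc, eqToHom_trans, eqToHom_refl, Category.comp_id]; rfl
    · rw [dif_neg hi, dif_neg hi]; erw [zero_comp, zero_comp]

/-- The canonical projection `X ⟶ σ_{≤ n} X`. -/
noncomputable def truncLEπ (X : CochainComplex C ℤ) (n : ℤ) : X ⟶ truncLE X n where
  f i := if hi : i ≤ n then eqToHom ((if_pos hi).symm.trans (truncLE_X X n i).symm) else 0
  comm' := by
    rintro i j (rfl : i + 1 = j)
    try dsimp only
    rw [truncLE_d]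
    by_cases hj : i + 1 ≤ n
    · rw [dif_pos hj, dif_pos (show i ≤ n by omega), dif_pos hj]
      erw [eqToHom_trans_assoc, eqToHom_refl, Category.id_comp]; rfl
    · rw [dif_neg hj, dif_neg hj]; erw [comp_zero, comp_zero]

/-- The canonical projection `σ_{≤ a} X ⟶ σ_{≤ b} X` for `b ≤ a`. -/
noncomputable def truncLEmap (X : CochainComplex C ℤ) (a b : ℤ) (hba : b ≤ a) :
    truncLE X a ⟶ truncLE X b where
  f i := if hi : i ≤ b then
      eqToHom (((truncLE_X X a i).trans (if_pos (hi.trans hba))).trans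
        (((truncLE_X X b i).trans (if_pos hi)).symm))
    else 0
  comm' := by
    rintro i j (rfl : i + 1 = j)
    try dsimp only
    rw [truncLE_d, truncLE_d]
    by_cases hj : i + 1 ≤ b
    · rw [dif_pos hj, dif_pos (show i ≤ b by omega), dif_pos (show i + 1 ≤ a by omega),
        dif_pos hj]
      erw [eqToHom_trans_assoc, Category.assoc, Category.assoc, eqToHom_trans]; rfl
    · rw [dif_neg hj, dif_neg hj]; erw [comp_zero, comp_zero]

/-- A complex is bounded above if its components vanish in all sufficiently
large degrees. -/
def BoundedAbove (X : CochainComplex C ℤ) : Prop :=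
  ∃ b : ℤ, ∀ i : ℤ, b < i → IsZero (X.X i)

/-- A complex is bounded below if its components vanish in all sufficiently
small degrees. -/
def BoundedBelow (X : CochainComplex C ℤ) : Prop :=
  ∃ a : ℤ, ∀ i : ℤ, i < a → IsZero (X.X i)

/-- A complex is bounded if it is bounded above and bounded below. -/
def BoundedComplex (X : CochainComplex C ℤ) : Prop :=
  BoundedAbove X ∧ BoundedBelow X

variable (C) [HasBinaryBiproducts C]

open Pretriangulated in
/-- The class of morphisms in the homotopy category `K(C)` whose cone is isomorphic
to a bounded complex; the Verdier quotient `K(C)/K^b(C)` is the localization of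
`K(C)` at this class. -/
noncomputable def Wb : MorphismProperty (HomotopyCategory C (ComplexShape.up ℤ)) :=
  fun X Y f =>
    ∃ (Z : HomotopyCategory C (ComplexShape.up ℤ)) (g : Y ⟶ Z) (h : Z ⟶ X⟦(1 : ℤ)⟧),
      (Triangle.mk f g h ∈ distTriang (HomotopyCategory C (ComplexShape.up ℤ))) ∧
      ∃ Z₀ : CochainComplex C ℤ, BoundedComplex Z₀ ∧
        Nonempty (Z ≅ (HomotopyCategory.quotient C (ComplexShape.up ℤ)).obj Z₀)

end Brutal

/-- Abbreviation for the quotient functor to the homotopy category. -/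
noncomputable abbrev Qc (C : Type*) [CategoryTheory.Category C] [CategoryTheory.Preadditive C] :=
  HomotopyCategory.quotient C (ComplexShape.up ℤ)

section Aux

open Pretriangulated

variable {C : Type*} [Category C] [Preadditive C] [HasZeroObject C] [HasBinaryBiproducts C]

local notation "K" => HomotopyCategory C (ComplexShape.up ℤ)

lemma isZero_truncLE_X (Y : CochainComplex C ℤ) (n i : ℤ) (h : n < i) :
    IsZero ((truncLE Y n).X i) := by
  rw [truncLE_X, if_neg (by omega)]
  exact isZero_zero C

lemma isZero_truncGE_X (Y : CochainComplex C ℤ) (n i : ℤ) (h : i < n) :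
    IsZero ((truncGE Y n).X i) := by
  rw [truncGE_X, if_neg (by omega)]
  exact isZero_zero C

lemma truncGE_bounded (Y : CochainComplex C ℤ) (b : ℤ)
    (hb : ∀ i, b < i → IsZero (Y.X i)) (n : ℤ) :
    BoundedComplex (truncGE Y n) := by
  refine ⟨⟨b, fun i hi => ?_⟩, ⟨n, fun i hi => isZero_truncGE_X Y n i hi⟩⟩
  rw [truncGE_X]
  split
  · exact hb i hi
  · exact isZero_zero C

lemma truncLEπ_comp_truncLEmap (Y : CochainComplex C ℤ) (a b : ℤ) (h : b ≤ a) :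
    truncLEπ Y a ≫ truncLEmap Y a b h = truncLEπ Y b := by
  ext i
  dsimp [truncLEπ, truncLEmap]
  by_cases hi : i ≤ b
  · rw [dif_pos hi, dif_pos (hi.trans h), dif_pos hi, eqToHom_trans]
  · rw [dif_neg hi, dif_neg hi, comp_zero]

lemma bounded_zero : BoundedComplex (0 : CochainComplex C ℤ) := by
  have : ∀ i : ℤ, IsZero ((0 : CochainComplex C ℤ).X i) := fun i =>
    (HomologicalComplex.eval C (ComplexShape.up ℤ) i).map_isZero
      (isZero_zero (CochainComplex C ℤ))
  exact ⟨⟨0, fun i _ => this i⟩, ⟨0, fun i _ => this i⟩⟩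

lemma bounded_shift {A : CochainComplex C ℤ} (h : BoundedComplex A) (n : ℤ) :
    BoundedComplex (A⟦n⟧) := by
  obtain ⟨⟨b, hb⟩, ⟨a, ha⟩⟩ := h
  refine ⟨⟨b - n, fun i hi => ?_⟩, ⟨a - n, fun i hi => ?_⟩⟩
  · rw [CochainComplex.shiftFunctor_obj_X']
    exact hb _ (by omega)
  · rw [CochainComplex.shiftFunctor_obj_X']
    exact ha _ (by omega)

lemma bounded_mappingCone {A B : CochainComplex C ℤ} (φ : A ⟶ B)
    (hA : BoundedComplex A) (hB : BoundedComplex B) :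
    BoundedComplex (CochainComplex.mappingCone φ) := by
  obtain ⟨⟨bA, hbA⟩, ⟨aA, haA⟩⟩ := hA
  obtain ⟨⟨bB, hbB⟩, ⟨aB, haB⟩⟩ := hB
  have key : ∀ i : ℤ, IsZero (A.X (i + 1)) → IsZero (B.X i) →
      IsZero ((CochainComplex.mappingCone φ).X i) := fun i h1 h2 => by
    refine IsZero.of_iso ?_ (HomologicalComplex.homotopyCofiber.XIsoBiprod φ i (i + 1) rfl)
    rw [Limits.biprod_isZero_iff]
    exact ⟨h1, h2⟩
  refine ⟨⟨max bA bB, fun i hi => key i (hbA _ (by omega)) (hbB _ (by omega))⟩,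
    ⟨min (aA - 1) aB, fun i hi => key i (haA _ (by omega)) (haB _ (by omega))⟩⟩

lemma hom_ext_zero {A B : CochainComplex C ℤ}
    (h : ∀ i, IsZero (A.X i) ∨ IsZero (B.X i))
    (f : (Qc C).obj A ⟶ (Qc C).obj B) : f = 0 := by
  obtain ⟨φ, rfl⟩ := (Qc C).map_surjective f
  have hφ : φ = 0 := by
    ext i
    rcases h i with h' | h'
    · exact h'.eq_of_src _ _
    · exact h'.eq_of_tgt _ _
  rw [hφ, Functor.map_zero]

end Aux

section Main

open Pretriangulated

variable (C : Type*) [Category C] [Preadditive C] [HasZeroObject C] [HasBinaryBiproducts C]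

local notation "K" => HomotopyCategory C (ComplexShape.up ℤ)

/-- The predicate of being isomorphic to the image of a bounded complex. -/
def Pb : HomotopyCategory C (ComplexShape.up ℤ) → Prop :=
  fun Z => ∃ Z₀ : CochainComplex C ℤ, BoundedComplex Z₀ ∧ Nonempty (Z ≅ (Qc C).obj Z₀)

lemma Pb_zero : Pb C 0 :=
  ⟨0, bounded_zero, ⟨(isZero_zero K).isoZero.trans
    (((Qc C).map_isZero (isZero_zero (CochainComplex C ℤ))).isoZero).symm⟩⟩

lemma Pb_shift (X : K) (n : ℤ) (h : Pb C X) : Pb C (X⟦n⟧) := by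
  obtain ⟨Z₀, hZ₀, ⟨e⟩⟩ := h
  exact ⟨Z₀⟦n⟧, bounded_shift hZ₀ n,
    ⟨(shiftFunctor K n).mapIso e ≪≫ (((Qc C).commShiftIso n).app Z₀).symm⟩⟩

lemma Pb_ext₂ (T : Triangle K) (hT : T ∈ distTriang K)
    (h₁ : Pb C T.obj₁) (h₃ : Pb C T.obj₃) : Pb C T.obj₂ := by
  obtain ⟨A, hA, ⟨e₁⟩⟩ := h₁
  obtain ⟨B, hB, ⟨e₃⟩⟩ := h₃
  have hU := inv_rot_of_distTriang T hT
  let U := T.invRotate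
  let m : (Qc C).obj (B⟦(-1 : ℤ)⟧) ⟶ (Qc C).obj A :=
    ((Qc C).commShiftIso (-1 : ℤ)).hom.app B ≫ (shiftFunctor K (-1 : ℤ)).map e₃.inv ≫
      U.mor₁ ≫ e₁.hom
  obtain ⟨φ, hφ⟩ := (Qc C).map_surjective m
  have hMC := HomotopyCategory.mappingCone_triangleh_distinguished φ
  let i₁ : U.obj₁ ≅ (Qc C).obj (B⟦(-1 : ℤ)⟧) :=
    (shiftFunctor K (-1 : ℤ)).mapIso e₃ ≪≫ (((Qc C).commShiftIso (-1 : ℤ)).app B).symm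
  have comm : U.mor₁ ≫ e₁.hom = i₁.hom ≫ (Qc C).map φ := by
    rw [hφ]
    change U.mor₁ ≫ e₁.hom = ((shiftFunctor K (-1 : ℤ)).map e₃.hom ≫
      ((Qc C).commShiftIso (-1 : ℤ)).inv.app B) ≫ (((Qc C).commShiftIso (-1 : ℤ)).hom.app B ≫
        (shiftFunctor K (-1 : ℤ)).map e₃.inv ≫ U.mor₁ ≫ e₁.hom)
    rw [Category.assoc, Iso.inv_hom_id_app_assoc, ← Functor.map_comp_assoc,
      e₃.hom_inv_id]
    simp
    rfl
  have eT := isoTriangleOfIso₁₂ U (CochainComplex.mappingCone.triangleh φ) hU hMC i₁ e₁ comm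
  exact ⟨CochainComplex.mappingCone φ,
    bounded_mappingCone φ (bounded_shift hB (-1)) hA,
    ⟨(Triangle.π₃.mapIso eT : U.obj₃ ≅ _)⟩⟩

/-- The triangulated subcategory of objects isomorphic to bounded complexes. -/
noncomputable def Sb : ObjectProperty K := Pb C

instance : (Sb C).IsClosedUnderIsomorphisms where
  of_iso := by
    rintro X Y e ⟨Z₀, hZ₀, ⟨e'⟩⟩
    exact ⟨Z₀, hZ₀, ⟨e.symm ≪≫ e'⟩⟩

instance : (Sb C).ContainsZero := ⟨⟨0, isZero_zero K, Pb_zero C⟩⟩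

instance : (Sb C).IsStableUnderShift ℤ := ⟨fun a => ⟨fun X h => Pb_shift C X a h⟩⟩

instance : (Sb C).IsTriangulatedClosed₂ :=
  ObjectProperty.IsTriangulatedClosed₂.mk' (P := Sb C) (Pb_ext₂ C)

instance : (Sb C).IsTriangulated where

lemma Wb_eq_W : Wb C = (Sb C).trW := by
  ext X Y f
  constructor
  · rintro ⟨Z, g, h, hT, hP⟩
    exact ⟨Z, g, h, hT, hP⟩
  · rintro ⟨Z, g, h, hT, hP⟩
    exact ⟨Z, g, h, hT, hP⟩

variable {C}

lemma Wπ (Y : CochainComplex C ℤ) (hY : BoundedAbove Y) (n : ℤ) :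
    (Sb C).trW ((Qc C).map (truncLEπ Y n)) := by
  obtain ⟨b, hb⟩ := hY
  have hzero : truncGEι Y (n + 1) ≫ truncLEπ Y n = 0 := by
    ext i
    dsimp [truncGEι, truncLEπ]
    by_cases hi : n + 1 ≤ i
    · rw [dif_neg (show ¬ i ≤ n by omega), comp_zero]
    · rw [dif_neg hi, zero_comp]
  let Sc : ShortComplex (CochainComplex C ℤ) :=
    ShortComplex.mk (truncGEι Y (n + 1)) (truncLEπ Y n) hzero
  let σ : ∀ i, (Sc.map (HomologicalComplex.eval C (ComplexShape.up ℤ) i)).Splitting :=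
    fun i =>
      if hi : n + 1 ≤ i then
        { r := eqToHom ((truncGE_X Y (n + 1) i).trans (if_pos hi)).symm
          s := 0
          f_r := by
            dsimp [Sc, ShortComplex.map, HomologicalComplex.eval, truncGEι]
            rw [dif_pos hi, eqToHom_trans, eqToHom_refl]
          s_g := (isZero_truncLE_X Y n i (by omega)).eq_of_tgt _ _
          id := by
            dsimp [Sc, ShortComplex.map, HomologicalComplex.eval, truncGEι, truncLEπ]
            erw [dif_pos hi, dif_neg (show ¬ i ≤ n by omega), eqToHom_trans, eqToHom_refl,
              zero_comp, add_zero] }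
      else
        { r := 0
          s := eqToHom ((truncLE_X Y n i).trans (if_pos (by omega : i ≤ n)))
          f_r := (isZero_truncGE_X Y (n + 1) i (by omega)).eq_of_tgt _ _
          s_g := by
            dsimp [Sc, ShortComplex.map, HomologicalComplex.eval, truncLEπ]
            erw [dif_pos (show i ≤ n by omega), eqToHom_trans, eqToHom_refl]
          id := by
            dsimp [Sc, ShortComplex.map, HomologicalComplex.eval, truncGEι, truncLEπ]
            erw [dif_neg hi, dif_pos (show i ≤ n by omega), comp_zero, zero_add,
              eqToHom_trans, eqToHom_refl] }
  have hdist : CochainComplex.trianglehOfDegreewiseSplit Sc σ ∈ distTriang K :=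
    (HomotopyCategory.distinguished_iff_iso_trianglehOfDegreewiseSplit _).2
      ⟨Sc, σ, ⟨Iso.refl _⟩⟩
  exact ObjectProperty.trW.mk' (Sb C) hdist
    ⟨truncGE Y (n + 1), truncGE_bounded Y b hb (n + 1), ⟨Iso.refl _⟩⟩

lemma factor {W' Z : K} (s : W' ⟶ Z) (hs : (Sb C).trW s) :
    ∃ a : ℤ, ∀ (T₀ : CochainComplex C ℤ) (_ : ∀ i, a ≤ i → IsZero (T₀.X i))
      (q : W' ⟶ (Qc C).obj T₀), ∃ t : Z ⟶ (Qc C).obj T₀, s ≫ t = q := by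
  obtain ⟨Z', g, h, hT, Z₀, hZ₀, ⟨e⟩⟩ := hs
  obtain ⟨a₀, ha₀⟩ := hZ₀.2
  refine ⟨a₀ + 1, fun T₀ hT₀ q => ?_⟩
  have hU := inv_rot_of_distTriang _ hT
  have hzero : (Triangle.mk s g h).invRotate.mor₁ ≫ q = 0 := by
    have hz : ∀ (ζ : Z'⟦(-1 : ℤ)⟧ ⟶ (Qc C).obj T₀), ζ = 0 := by
      intro ζ
      let u : (Qc C).obj (Z₀⟦(-1 : ℤ)⟧) ≅ Z'⟦(-1 : ℤ)⟧ :=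
        ((Qc C).commShiftIso (-1 : ℤ)).app Z₀ ≪≫ (shiftFunctor K (-1 : ℤ)).mapIso e.symm
      have h0 : u.hom ≫ ζ = 0 := by
        refine hom_ext_zero (fun i => ?_) _
        by_cases hi : i ≤ a₀
        · refine Or.inl ?_
          rw [CochainComplex.shiftFunctor_obj_X']
          exact ha₀ _ (by omega)
        · exact Or.inr (hT₀ i (by omega))
      calc ζ = u.inv ≫ (u.hom ≫ ζ) := by simp
      _ = 0 := by rw [h0, comp_zero]
    exact hz _
  obtain ⟨t, ht⟩ := Triangle.yoneda_exact₂ _ hU q hzero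
  exact ⟨t, ht.symm⟩

lemma L_additive {D : Type*} [Category D] [Preadditive D]
    (L : HomotopyCategory C (ComplexShape.up ℤ) ⥤ D) [L.IsLocalization (Sb C).trW] :
    L.Additive := by
  have hstab : (Sb C).trW.IsStableUnderProductsOfShape WalkingPair := by
    apply MorphismProperty.IsStableUnderProductsOfShape.mk
    intro X₁ X₂ _ _ f hf
    choose Z g h hdist hP using fun j => ((Sb C).trW_iff (f j)).1 (hf j)
    have hprod := productTriangle_distinguished
      (fun j => Triangle.mk (f j) (g j) (h j)) hdist
    refine ObjectProperty.trW.mk (Sb C) hprod ?_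
    have natiso : Discrete.functor (fun j => Z j) ≅
        pair (Z WalkingPair.left) (Z WalkingPair.right) :=
      Discrete.natIso (fun j => match j with
        | ⟨WalkingPair.left⟩ => Iso.refl _
        | ⟨WalkingPair.right⟩ => Iso.refl _)
    have hbi : (Sb C) (Z WalkingPair.left ⊞ Z WalkingPair.right) :=
      (Sb C).ext_of_isTriangulatedClosed₂ _ (binaryBiproductTriangle_distinguished
        (Z WalkingPair.left) (Z WalkingPair.right)) (hP _) (hP _)
    exact (Sb C).prop_of_iso
      ((biprod.isoProd _ _ ≪≫ (HasLimit.isoOfNatIso natiso).symm).symm).symm hbi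
  have hpres : PreservesLimitsOfShape (Discrete WalkingPair) L :=
    Localization.preservesProductsOfShape L (Sb C).trW WalkingPair
  -- `L.obj 0` is a zero object
  have hzero : IsZero (L.obj 0) := by
    let cn : BinaryFan (0 : K) (0 : K) := BinaryFan.mk (𝟙 0) (𝟙 0)
    have hc : IsLimit cn := BinaryFan.isLimitMk (fun _ => 0)
      (fun s => ((isZero_zero K).eq_of_tgt _ _))
      (fun s => ((isZero_zero K).eq_of_tgt _ _))
      (fun s m _ _ => ((isZero_zero K).eq_of_tgt _ _))
    have hl := isLimitOfPreserves L hc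
    let s : Cone (pair (0 : K) 0 ⋙ L) :=
      { pt := L.obj 0
        π := Discrete.natTrans (fun j => match j with
          | ⟨WalkingPair.left⟩ => 𝟙 _
          | ⟨WalkingPair.right⟩ => 0) }
    have e₁ := hl.fac s ⟨WalkingPair.left⟩
    have e₂ := hl.fac s ⟨WalkingPair.right⟩
    dsimp [cn, s] at e₁ e₂
    rw [L.map_id, Category.comp_id] at e₁ e₂
    rw [IsZero.iff_id_eq_zero, ← e₁, e₂]
    rfl
  have hpz : L.PreservesZeroMorphisms := by
    refine ⟨fun {X Y} => ?_⟩
    have : (0 : X ⟶ Y) = (0 : X ⟶ 0) ≫ (0 : (0 : K) ⟶ Y) := by simp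
    rw [this, L.map_comp, hzero.eq_of_src (L.map (0 : (0 : K) ⟶ Y)) 0, comp_zero]
  exact L.additive_of_preserves_binary_products

end Main


/-- **Hom groups in `K(𝔞)/K^b(𝔞)` into a bounded-above complex as a filtered colimit.**
Let `Y` be bounded above and `X` arbitrary. In any localization `L` of the homotopy
category `K(𝔞)` at the class `Wb` of morphisms with bounded cone (i.e. in the Verdier
quotient `K(𝔞)/K^b(𝔞)`), the Hom group `Hom(X, Y)` is naturally isomorphic to the
colimit over `n` of `Hom_{K(𝔞)}(X, σ_{≤ -n} Y)`, with structure maps induced by the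
projections `σ_{≤ -n} Y ⟶ σ_{≤ -(n+1)} Y`.  This is expressed by the existence of a
canonical compatible family of additive maps `c n : Hom_{K(𝔞)}(X, σ_{≤ -n} Y) →
Hom(L X, L Y)` (characterized by `c n f ≫ L (π_n) = L f`) which is a colimit cocone:
jointly surjective, and two elements are identified exactly if they agree at some
later stage. -/
theorem hom_quotient_iso_colim_hom_truncLE
    {C : Type*} [Category C] [Preadditive C] [HasZeroObject C] [HasBinaryBiproducts C]
    {D : Type*} [Category D] [Preadditive D]
    (L : HomotopyCategory C (ComplexShape.up ℤ) ⥤ D) [L.IsLocalization (Wb C)]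
    (X Y : CochainComplex C ℤ) (hY : BoundedAbove Y) :
    ∃ c : ∀ n : ℕ,
      ((HomotopyCategory.quotient C (ComplexShape.up ℤ)).obj X ⟶
        (HomotopyCategory.quotient C (ComplexShape.up ℤ)).obj (truncLE Y (-(n : ℤ)))) →
      (L.obj ((HomotopyCategory.quotient C (ComplexShape.up ℤ)).obj X) ⟶
        L.obj ((HomotopyCategory.quotient C (ComplexShape.up ℤ)).obj Y)),
      -- each `c n` is additive
      (∀ (n : ℕ) (f g), c n (f + g) = c n f + c n g) ∧
      -- `c n` is characterized by composing back with the projection `π_n`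
      (∀ (n : ℕ) (f), c n f ≫
          L.map ((HomotopyCategory.quotient C (ComplexShape.up ℤ)).map
            (truncLEπ Y (-(n : ℤ)))) =
        L.map f) ∧
      -- compatibility with the structure maps of the colimit
      (∀ (n : ℕ) (f), c (n + 1)
          (f ≫ (HomotopyCategory.quotient C (ComplexShape.up ℤ)).map
            (truncLEmap Y (-(n : ℤ)) (-((n + 1 : ℕ) : ℤ)) (by omega))) = c n f) ∧
      -- joint surjectivity
      (∀ g : L.obj ((HomotopyCategory.quotient C (ComplexShape.up ℤ)).obj X) ⟶
          L.obj ((HomotopyCategory.quotient C (ComplexShape.up ℤ)).obj Y),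
        ∃ (n : ℕ) (f : _), c n f = g) ∧
      -- elements identified in the colimit agree at a later stage
      (∀ (n : ℕ) (f f'), c n f = c n f' →
        ∃ (m : ℕ) (hnm : n ≤ m),
          f ≫ (HomotopyCategory.quotient C (ComplexShape.up ℤ)).map
              (truncLEmap Y (-(n : ℤ)) (-(m : ℤ)) (by omega)) =
          f' ≫ (HomotopyCategory.quotient C (ComplexShape.up ℤ)).map
              (truncLEmap Y (-(n : ℤ)) (-(m : ℤ)) (by omega))) := by

  classical
  haveI : L.IsLocalization (Sb C).trW := by rw [← Wb_eq_W]; infer_instance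
  haveI : L.Additive := L_additive L
  set Q := HomotopyCategory.quotient C (ComplexShape.up ℤ) with hQ
  have hπ : ∀ n : ℕ, (Sb C).trW (Q.map (truncLEπ Y (-(n : ℤ)))) := fun n => Wπ Y hY _
  let e : ∀ n : ℕ, L.obj (Q.obj Y) ≅ L.obj (Q.obj (truncLE Y (-(n : ℤ)))) := fun n =>
    Localization.isoOfHom L (Sb C).trW _ (hπ n)
  have he : ∀ n, (e n).hom = L.map (Q.map (truncLEπ Y (-(n : ℤ)))) := fun n => rfl
  refine ⟨fun n f => L.map f ≫ (e n).inv, ?_, ?_, ?_, ?_, ?_⟩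
  · intro n f g
    dsimp only
    rw [L.map_add, Preadditive.add_comp]
  · intro n f
    dsimp only
    rw [Category.assoc, ← he n, Iso.inv_hom_id, Category.comp_id]
  · intro n f
    have hcomp : truncLEπ Y (-(n : ℤ)) ≫
        truncLEmap Y (-(n : ℤ)) (-((n + 1 : ℕ) : ℤ)) (by push_cast; omega) =
        truncLEπ Y (-((n + 1 : ℕ) : ℤ)) :=
      truncLEπ_comp_truncLEmap Y _ _ _
    dsimp only
    rw [L.map_comp, Category.assoc]
    congr 1
    rw [Iso.comp_inv_eq]
    have : (e (n + 1)).hom = L.map (Q.map (truncLEπ Y (-(n : ℤ)))) ≫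
        L.map (Q.map (truncLEmap Y (-(n : ℤ)) (-((n + 1 : ℕ) : ℤ)) (by push_cast; omega))) := by
      rw [he (n + 1), ← L.map_comp, ← Q.map_comp, hcomp]
    rw [this, ← Category.assoc, ← he n, Iso.inv_hom_id, Category.id_comp]
  · intro g
    obtain ⟨φ, hφ⟩ := Localization.exists_leftFraction L (Sb C).trW g
    obtain ⟨a, hfac⟩ := factor φ.s φ.hs
    set m : ℕ := (1 - a).toNat with hm
    have hma : 1 - a ≤ (m : ℤ) := Int.self_le_toNat _
    have hcond : ∀ i, a ≤ i → IsZero ((truncLE Y (-(m : ℤ))).X i) := fun i hi =>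
      isZero_truncLE_X Y _ i (by omega)
    obtain ⟨t, ht⟩ := hfac (truncLE Y (-(m : ℤ))) hcond (Q.map (truncLEπ Y (-(m : ℤ))))
    refine ⟨m, φ.f ≫ t, ?_⟩
    dsimp only
    rw [hφ, Iso.comp_inv_eq]
    rw [he m, ← ht, L.map_comp, L.map_comp, ← Category.assoc,
      MorphismProperty.LeftFraction.map_comp_map_s]
  · intro n f f' hff'
    have hLf : L.map f = L.map f' := by
      have h1 : L.map f ≫ (e n).inv = L.map f' ≫ (e n).inv := hff'
      simpa using (Iso.cancel_iso_inv_right _ _ _).1 h1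
    obtain ⟨Z, s, hs, hfs⟩ := (MorphismProperty.map_eq_iff_postcomp L (Sb C).trW f f').1 hLf
    obtain ⟨a, hfac⟩ := factor s hs
    set m : ℕ := max n (1 - a).toNat with hm
    have hma : 1 - a ≤ (m : ℤ) := le_trans (Int.self_le_toNat _) (by exact_mod_cast le_max_right _ _)
    have hnm : n ≤ m := le_max_left _ _
    have hcond : ∀ i, a ≤ i → IsZero ((truncLE Y (-(m : ℤ))).X i) := fun i hi =>
      isZero_truncLE_X Y _ i (by omega)
    obtain ⟨t, ht⟩ := hfac (truncLE Y (-(m : ℤ))) hcond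
      (Q.map (truncLEmap Y (-(n : ℤ)) (-(m : ℤ)) (by push_cast; omega)))
    refine ⟨m, hnm, ?_⟩
    have key : f ≫ (s ≫ t) = f' ≫ (s ≫ t) := by
      rw [← Category.assoc, ← Category.assoc, hfs]
    rw [ht] at key
    exact key
end

section
/- Let 𝒞 be a strongly pretriangulated dg category and ℐ a dg ideal of 𝒞 such that for every degree-zero morphism f : X → Y with d(f) ∈ ℐ(X, Y), there exist degree-zero morphisms ι : X' → X and κ : Y → Y' with d(κ ∘ f ∘ ι) = 0 and with ι, κ representing dg-isomorphisms in the factor dg category 𝒞/ℐ. Then the factor dg category 𝒞/ℐ is strongly pretriangulated. -/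
universe u v

/-- A differential graded (dg) category: morphisms are graded by `ℤ`, with a
differential `d` of degree `1` satisfying `d ∘ d = 0` and the graded Leibniz rule,
and biadditive degreewise composition. -/
structure DGCat where
  Obj : Type u
  Hom : Obj → Obj → ℤ → Type v
  addCommGroup : ∀ X Y n, AddCommGroup (Hom X Y n)
  id : ∀ X, Hom X X 0
  comp : ∀ {X Y Z : Obj} {m n : ℤ}, Hom X Y m → Hom Y Z n → Hom X Z (m + n)
  d : ∀ {X Y : Obj} {n : ℤ}, Hom X Y n → Hom X Y (n + 1)
  id_comp : ∀ {X Y : Obj} {n : ℤ} (f : Hom X Y n),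
    comp (id X) f = (zero_add n).symm ▸ f
  comp_id : ∀ {X Y : Obj} {n : ℤ} (f : Hom X Y n),
    comp f (id Y) = (add_zero n).symm ▸ f
  assoc : ∀ {X Y Z W : Obj} {m n k : ℤ}
    (f : Hom X Y m) (g : Hom Y Z n) (h : Hom Z W k),
    comp (comp f g) h = (add_assoc m n k).symm ▸ comp f (comp g h)
  comp_add : ∀ {X Y Z : Obj} {m n : ℤ} (f : Hom X Y m) (g g' : Hom Y Z n),
    comp f (g + g') = comp f g + comp f g'
  add_comp : ∀ {X Y Z : Obj} {m n : ℤ} (f f' : Hom X Y m) (g : Hom Y Z n),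
    comp (f + f') g = comp f g + comp f' g
  d_add : ∀ {X Y : Obj} {n : ℤ} (f g : Hom X Y n), d (f + g) = d f + d g
  d_d : ∀ {X Y : Obj} {n : ℤ} (f : Hom X Y n), d (d f) = 0
  d_id : ∀ X, d (id X) = 0
  leibniz : ∀ {X Y Z : Obj} {m n : ℤ} (f : Hom X Y m) (g : Hom Y Z n),
    d (comp f g) =
      ((by omega : m + 1 + n = m + n + 1) ▸ comp (d f) g) +
      (m.negOnePow : ℤ) • ((by omega : m + (n + 1) = m + n + 1) ▸ comp f (d g))

attribute [instance] DGCat.addCommGroup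

namespace DGCat

variable (C : DGCat.{u, v})

/-- A dg ideal: a collection of subgroups of the morphism groups closed under the
differential and under composition with arbitrary morphisms on either side. -/
structure DGIdeal where
  I : ∀ X Y : C.Obj, ∀ n : ℤ, AddSubgroup (C.Hom X Y n)
  d_mem : ∀ {X Y : C.Obj} {n : ℤ} {f : C.Hom X Y n}, f ∈ I X Y n → C.d f ∈ I X Y (n + 1)
  comp_mem_left : ∀ {X Y Z : C.Obj} {m n : ℤ} (f : C.Hom X Y m) {g : C.Hom Y Z n},
    g ∈ I Y Z n → C.comp f g ∈ I X Z (m + n)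
  comp_mem_right : ∀ {X Y Z : C.Obj} {m n : ℤ} {f : C.Hom X Y m} (g : C.Hom Y Z n),
    f ∈ I X Y m → C.comp f g ∈ I X Z (m + n)

variable {C}
variable (J : DGIdeal C)

/-- `u : X ⟶ Y` represents a dg-isomorphism (a closed degree-zero isomorphism) in
the factor dg category `C/J`. -/
def RepresentsDGIsoMod {X Y : C.Obj} (u : C.Hom X Y 0) : Prop :=
  C.d u ∈ J.I X Y (0 + 1) ∧
  ∃ v : C.Hom Y X 0, C.d v ∈ J.I Y X (0 + 1) ∧
    C.comp u v - (zero_add (0 : ℤ)).symm ▸ C.id X ∈ J.I X X (0 + 0) ∧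
    C.comp v u - (zero_add (0 : ℤ)).symm ▸ C.id Y ∈ J.I Y Y (0 + 0)

/-- The object `X` has an internal `k`-th shift in the factor dg category `C/J`:
there is an object `X'` and a closed isomorphism of degree `k` from `X` to `X'`. -/
def HasShiftMod (X : C.Obj) (k : ℤ) : Prop :=
  ∃ (X' : C.Obj) (u : C.Hom X X' k) (v : C.Hom X' X (-k)),
    C.d u ∈ J.I X X' (k + 1) ∧ C.d v ∈ J.I X' X (-k + 1) ∧
    C.comp u v - (by omega : (0 : ℤ) = k + -k) ▸ C.id X ∈ J.I X X (k + -k) ∧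
    C.comp v u - (by omega : (0 : ℤ) = -k + k) ▸ C.id X' ∈ J.I X' X' (-k + k)

/-- The morphism `f : X ⟶ Y` (of degree `0`, closed in `C/J`) has an internal cone
in the factor dg category `C/J`: an object `Cf` with structure morphisms
`j : Y ⟶ Cf`, `t : Cf ⟶ Y`, `p : Cf ⟶ X` (degree `1`), `s : X ⟶ Cf` (degree `-1`)
satisfying the biproduct-type identities and `d s = j ∘ f`, `d t = - f ∘ p`,
all modulo `J`. -/
def HasConeMod {X Y : C.Obj} (f : C.Hom X Y 0) : Prop :=
  ∃ (Cf : C.Obj) (j : C.Hom Y Cf 0) (t : C.Hom Cf Y 0)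
    (p : C.Hom Cf X 1) (s : C.Hom X Cf (-1)),
    C.d j ∈ J.I Y Cf (0 + 1) ∧ C.d p ∈ J.I Cf X (1 + 1) ∧
    C.d s - (by omega : (0 : ℤ) + 0 = -1 + 1) ▸ C.comp f j ∈ J.I X Cf (-1 + 1) ∧
    C.d t - (-(((by omega : (1 : ℤ) + 0 = 0 + 1) ▸ C.comp p f))) ∈ J.I Cf Y (0 + 1) ∧
    -- p ∘ j = 0 and t ∘ s = 0
    C.comp j p ∈ J.I Y X (0 + 1) ∧
    C.comp s t ∈ J.I X Y (-1 + 0) ∧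
    -- Id = s ∘ p + j ∘ t
    ((by omega : (0 : ℤ) = 1 + -1) ▸ C.id Cf) - (C.comp p s +
      (by omega : (0 : ℤ) + 0 = 1 + -1) ▸ C.comp t j) ∈ J.I Cf Cf (1 + -1) ∧
    -- Id_Y = t ∘ j and Id_X = p ∘ s
    ((zero_add (0 : ℤ)).symm ▸ C.id Y) - C.comp j t ∈ J.I Y Y (0 + 0) ∧
    ((by omega : (0 : ℤ) = -1 + 1) ▸ C.id X) - C.comp s p ∈ J.I X X (-1 + 1)

/-- The trivial dg ideal (zero subgroups): the conditions above with `J = ⊥`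
express that `C` itself is strongly pretriangulated. -/
noncomputable def botIdeal : DGIdeal C where
  I _ _ _ := ⊥
  d_mem {X Y n f} h := by
    simp only [AddSubgroup.mem_bot] at h ⊢
    subst h
    calc C.d (0 : C.Hom X Y n) = C.d 0 + C.d 0 - C.d 0 := by abel
    _ = C.d (0 + 0) - C.d 0 := by rw [C.d_add]
    _ = 0 := by rw [add_zero]; abel
  comp_mem_left {X Y Z m n} f {g} h := by
    simp only [AddSubgroup.mem_bot] at h ⊢
    subst h
    calc C.comp f (0 : C.Hom Y Z n) = C.comp f 0 + C.comp f 0 - C.comp f 0 := by abel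
    _ = C.comp f (0 + 0) - C.comp f 0 := by rw [C.comp_add]
    _ = 0 := by rw [add_zero]; abel
  comp_mem_right {X Y Z m n} {f} g h := by
    simp only [AddSubgroup.mem_bot] at h ⊢
    subst h
    calc C.comp (0 : C.Hom X Y m) g = C.comp 0 g + C.comp 0 g - C.comp 0 g := by abel
    _ = C.comp (0 + 0) g - C.comp 0 g := by rw [C.add_comp]
    _ = 0 := by rw [add_zero]; abel

/-! ### Auxiliary infrastructure -/

section AuxBasic

variable {C : DGCat.{u, v}}

lemma comp_zero' {X Y Z : C.Obj} {m n : ℤ} (f : C.Hom X Y m) :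
    C.comp f (0 : C.Hom Y Z n) = 0 := by
  have h := C.comp_add f (0 : C.Hom Y Z n) 0
  rw [add_zero] at h
  exact left_eq_add.mp h

lemma zero_comp' {X Y Z : C.Obj} {m n : ℤ} (g : C.Hom Y Z n) :
    C.comp (0 : C.Hom X Y m) g = 0 := by
  have h := C.add_comp (0 : C.Hom X Y m) 0 g
  rw [add_zero] at h
  exact left_eq_add.mp h

lemma comp_neg' {X Y Z : C.Obj} {m n : ℤ} (f : C.Hom X Y m) (g : C.Hom Y Z n) :
    C.comp f (-g) = -C.comp f g := by
  have h := C.comp_add f g (-g)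
  rw [add_neg_cancel, comp_zero'] at h
  exact (neg_eq_of_add_eq_zero_right h.symm).symm

lemma neg_comp' {X Y Z : C.Obj} {m n : ℤ} (f : C.Hom X Y m) (g : C.Hom Y Z n) :
    C.comp (-f) g = -C.comp f g := by
  have h := C.add_comp f (-f) g
  rw [add_neg_cancel, zero_comp'] at h
  exact (neg_eq_of_add_eq_zero_right h.symm).symm

lemma comp_sub' {X Y Z : C.Obj} {m n : ℤ} (f : C.Hom X Y m) (g g' : C.Hom Y Z n) :
    C.comp f (g - g') = C.comp f g - C.comp f g' := by
  rw [sub_eq_add_neg, C.comp_add, comp_neg', ← sub_eq_add_neg]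

lemma sub_comp' {X Y Z : C.Obj} {m n : ℤ} (f f' : C.Hom X Y m) (g : C.Hom Y Z n) :
    C.comp (f - f') g = C.comp f g - C.comp f' g := by
  rw [sub_eq_add_neg, C.add_comp, neg_comp', ← sub_eq_add_neg]

lemma mem_trans {A : Type v} [AddCommGroup A] {S : AddSubgroup A} {x y : A}
    (h : x = y) (hy : y ∈ S) : x ∈ S := by rwa [h]

end AuxBasic

/-- Recast a morphism along an equality of degrees. -/
def rc (C : DGCat.{u, v}) {X Y : C.Obj} {m : ℤ} (n : ℤ) (f : C.Hom X Y m)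
    (h : m = n := by omega) : C.Hom X Y n := h ▸ f

/-- Composition, recast to a prescribed degree. -/
def cmp (C : DGCat.{u, v}) (k : ℤ) {X Y Z : C.Obj} {m n : ℤ}
    (f : C.Hom X Y m) (g : C.Hom Y Z n) (h : m + n = k := by omega) :
    C.Hom X Z k := C.rc k (C.comp f g) h

/-- Differential, recast to a prescribed degree. -/
def cd (C : DGCat.{u, v}) (k : ℤ) {X Y : C.Obj} {m : ℤ} (f : C.Hom X Y m)
    (h : m + 1 = k := by omega) : C.Hom X Y k := C.rc k (C.d f) h

section Canon

variable {C : DGCat.{u, v}}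

lemma cast_heq' {X Y : C.Obj} {m n : ℤ} (h : m = n) (f : C.Hom X Y m) :
    HEq (h ▸ f : C.Hom X Y n) f := by subst h; rfl

lemma crc_refl {X Y : C.Obj} {n : ℤ} (f : C.Hom X Y n) (h : n = n) :
    C.rc n f h = f := rfl

lemma cassoc {X Y Z W : C.Obj} {m n p a b k : ℤ}
    (f : C.Hom X Y m) (g : C.Hom Y Z n) (e : C.Hom Z W p)
    (h1 : m + n = a) (h2 : a + p = k) (h3 : n + p = b) (h4 : m + b = k) :
    C.cmp k (C.cmp a f g h1) e h2 = C.cmp k f (C.cmp b g e h3) h4 := by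
  subst h1; subst h3; subst h2
  exact C.assoc f g e

lemma cleib {X Y Z : C.Obj} {m n a b c k : ℤ}
    (f : C.Hom X Y m) (g : C.Hom Y Z n)
    (h1 : m + n = a) (h2 : a + 1 = k) (h3 : m + 1 = b) (h4 : b + n = k)
    (h5 : n + 1 = c) (h6 : m + c = k) :
    C.cd k (C.cmp a f g h1) h2 =
      C.cmp k (C.cd b f h3) g h4 + (m.negOnePow : ℤ) • C.cmp k f (C.cd c g h5) h6 := by
  subst h1; subst h3; subst h5; subst h2
  exact C.leibniz f g

lemma cmp_id {X Y : C.Obj} {m k : ℤ} (f : C.Hom X Y m)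
    (h1 : m + 0 = k) (h2 : m = k) :
    C.cmp k f (C.id Y) h1 = C.rc k f h2 := by
  subst h2
  exact eq_of_heq ((cast_heq' h1 _).trans
    ((heq_of_eq (C.comp_id f)).trans (cast_heq' _ f)))

lemma cid_cmp {X Y : C.Obj} {m k : ℤ} (f : C.Hom X Y m)
    (h1 : 0 + m = k) (h2 : m = k) :
    C.cmp k (C.id X) f h1 = C.rc k f h2 := by
  subst h2
  exact eq_of_heq ((cast_heq' h1 _).trans
    ((heq_of_eq (C.id_comp f)).trans (cast_heq' _ f)))

lemma cmp_add_right {X Y Z : C.Obj} {m n k : ℤ} (f : C.Hom X Y m)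
    (g g' : C.Hom Y Z n) (h : m + n = k) :
    C.cmp k f (g + g') h = C.cmp k f g h + C.cmp k f g' h := by
  subst h; exact C.comp_add f g g'

lemma cmp_add_left {X Y Z : C.Obj} {m n k : ℤ} (f f' : C.Hom X Y m)
    (g : C.Hom Y Z n) (h : m + n = k) :
    C.cmp k (f + f') g h = C.cmp k f g h + C.cmp k f' g h := by
  subst h; exact C.add_comp f f' g

lemma cmp_sub_right {X Y Z : C.Obj} {m n k : ℤ} (f : C.Hom X Y m)
    (g g' : C.Hom Y Z n) (h : m + n = k) :
    C.cmp k f (g - g') h = C.cmp k f g h - C.cmp k f g' h := by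
  subst h; exact comp_sub' f g g'

lemma cmp_sub_left {X Y Z : C.Obj} {m n k : ℤ} (f f' : C.Hom X Y m)
    (g : C.Hom Y Z n) (h : m + n = k) :
    C.cmp k (f - f') g h = C.cmp k f g h - C.cmp k f' g h := by
  subst h; exact sub_comp' f f' g

lemma cmp_neg_left {X Y Z : C.Obj} {m n k : ℤ} (f : C.Hom X Y m)
    (g : C.Hom Y Z n) (h : m + n = k) :
    C.cmp k (-f) g h = -C.cmp k f g h := by
  subst h; exact neg_comp' f g

lemma cmp_zero_right {X Y Z : C.Obj} {m n k : ℤ} (f : C.Hom X Y m)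
    (h : m + n = k) :
    C.cmp k f (0 : C.Hom Y Z n) h = 0 := by
  subst h; exact comp_zero' f

lemma cmp_zero_left {X Y Z : C.Obj} {m n k : ℤ} (g : C.Hom Y Z n)
    (h : m + n = k) :
    C.cmp k (0 : C.Hom X Y m) g h = 0 := by
  subst h; exact zero_comp' g

variable {J : DGIdeal C}

lemma cmp_mem_fst {X Y Z : C.Obj} {m n k : ℤ} {f : C.Hom X Y m}
    (g : C.Hom Y Z n) (h : m + n = k) (hf : f ∈ J.I X Y m) :
    C.cmp k f g h ∈ J.I X Z k := by
  subst h; exact J.comp_mem_right g hf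

lemma cmp_mem_snd {X Y Z : C.Obj} {m n k : ℤ} (f : C.Hom X Y m)
    {g : C.Hom Y Z n} (h : m + n = k) (hg : g ∈ J.I Y Z n) :
    C.cmp k f g h ∈ J.I X Z k := by
  subst h; exact J.comp_mem_left f hg

lemma cd_mem {X Y : C.Obj} {m k : ℤ} {f : C.Hom X Y m} (h : m + 1 = k)
    (hf : f ∈ J.I X Y m) : C.cd k f h ∈ J.I X Y k := by
  subst h; exact J.d_mem hf

end Canon

/-- **The factor dg category of a strongly pretriangulated dg category by a dg ideal
with lifting of closed morphisms is strongly pretriangulated.**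
Assume `C` is strongly pretriangulated (it has internal shifts and internal cones of
closed degree-zero morphisms, i.e. shifts and cones modulo the trivial ideal), and
let `J` be a dg ideal such that every degree-zero morphism `f : X ⟶ Y` with
`d f ∈ J` admits degree-zero morphisms `ι : X' ⟶ X` and `κ : Y ⟶ Y'` with
`d (κ ∘ f ∘ ι) = 0`, `ι` and `κ` representing dg-isomorphisms in `C/J`.  Then the
factor dg category `C/J` is strongly pretriangulated: every object has internal
shifts modulo `J`, and every degree-zero morphism that is closed modulo `J` has an
internal cone modulo `J`. -/
theorem factor_dg_category_strongly_pretriangulated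
    (C : DGCat.{u, v}) (J : DGIdeal C)
    -- `C` is strongly pretriangulated
    (hshift : ∀ (X : C.Obj) (k : ℤ), HasShiftMod (botIdeal (C := C)) X k)
    (hcone : ∀ {X Y : C.Obj} (f : C.Hom X Y 0), C.d f = 0 →
      HasConeMod (botIdeal (C := C)) f)
    -- lifting condition for `J`
    (hlift : ∀ {X Y : C.Obj} (f : C.Hom X Y 0), C.d f ∈ J.I X Y (0 + 1) →
      ∃ (X' Y' : C.Obj) (ι : C.Hom X' X 0) (κ : C.Hom Y Y' 0),
        C.d ((by omega : (0 : ℤ) + 0 + 0 = 0) ▸ C.comp (C.comp ι f) κ) = 0 ∧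
        RepresentsDGIsoMod J ι ∧ RepresentsDGIsoMod J κ) :
    (∀ (X : C.Obj) (k : ℤ), HasShiftMod J X k) ∧
    (∀ {X Y : C.Obj} (f : C.Hom X Y 0), C.d f ∈ J.I X Y (0 + 1) → HasConeMod J f) := by
  constructor
  · -- shifts
    intro X k
    obtain ⟨X', u, v, h1, h2, h3, h4⟩ := hshift X k
    exact ⟨X', u, v,
      mem_trans (AddSubgroup.mem_bot.mp h1) (zero_mem _),
      mem_trans (AddSubgroup.mem_bot.mp h2) (zero_mem _),
      mem_trans (AddSubgroup.mem_bot.mp h3) (zero_mem _),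
      mem_trans (AddSubgroup.mem_bot.mp h4) (zero_mem _)⟩
  · -- cones
    intro X Y f hf
    obtain ⟨X', Y', ι, κ, hg, hι, hκ⟩ := hlift f hf
    obtain ⟨hdι, ι', hdι', hιι', hι'ι⟩ := hι
    obtain ⟨hdκ, κ', hdκ', hκκ', hκ'κ⟩ := hκ
    obtain ⟨Cg, j', t', p', s', hj', hp', hs', ht', hjp', hst', hid, hYid, hXid⟩ :=
      hcone (C.comp (C.comp ι f) κ) hg
    -- canonical versions of the cone identities (exact in `C`)
    have E1 : C.cd 1 j' = 0 := by exact AddSubgroup.mem_bot.mp hj'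
    have E2 : C.cd 2 p' = 0 := by exact AddSubgroup.mem_bot.mp hp'
    have E3 : C.cd 0 s' = C.cmp 0 (C.cmp 0 (C.cmp 0 ι f) κ) j' := by
      exact sub_eq_zero.mp (AddSubgroup.mem_bot.mp hs')
    have E4 : C.cd 1 t' = -C.cmp 1 p' (C.cmp 0 (C.cmp 0 ι f) κ) := by
      exact sub_eq_zero.mp (AddSubgroup.mem_bot.mp ht')
    have E5 : C.cmp 1 j' p' = 0 := by exact AddSubgroup.mem_bot.mp hjp'
    have E6 : C.cmp (-1) s' t' = 0 := by exact AddSubgroup.mem_bot.mp hst'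
    have E7 : C.id Cg = C.cmp 0 p' s' + C.cmp 0 t' j' := by
      exact sub_eq_zero.mp (AddSubgroup.mem_bot.mp hid)
    have E8 : C.id Y' = C.cmp 0 j' t' := by
      exact sub_eq_zero.mp (AddSubgroup.mem_bot.mp hYid)
    have E9 : C.id X' = C.cmp 0 s' p' := by
      exact sub_eq_zero.mp (AddSubgroup.mem_bot.mp hXid)
    -- canonical versions of the iso-mod-J data
    have hdιc : C.cd 1 ι ∈ J.I X' X 1 := by exact hdι
    have hdι'c : C.cd 1 ι' ∈ J.I X X' 1 := by exact hdι'
    have hdκc : C.cd 1 κ ∈ J.I Y Y' 1 := by exact hdκ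
    have hdκ'c : C.cd 1 κ' ∈ J.I Y' Y 1 := by exact hdκ'
    have hιι'c : C.cmp 0 ι ι' - C.id X' ∈ J.I X' X' 0 := by exact hιι'
    have hι'ιc : C.cmp 0 ι' ι - C.id X ∈ J.I X X 0 := by exact hι'ι
    have hκκ'c : C.cmp 0 κ κ' - C.id Y ∈ J.I Y Y 0 := by exact hκκ'
    have hκ'κc : C.cmp 0 κ' κ - C.id Y' ∈ J.I Y' Y' 0 := by exact hκ'κ
    refine ⟨Cg, C.cmp 0 κ j', C.cmp 0 t' κ', C.cmp 1 p' ι, C.cmp (-1) ι' s',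
      ?_, ?_, ?_, ?_, ?_, ?_, ?_, ?_, ?_⟩
    · -- (a) d j ∈ J
      have key : C.cd 1 (C.cmp 0 κ j') =
          C.cmp 1 (C.cd 1 κ) j' + ((0 : ℤ).negOnePow : ℤ) • C.cmp 1 κ (C.cd 1 j') :=
        cleib κ j' (by omega) (by omega) (by omega) (by omega) (by omega) (by omega)
      rw [E1, cmp_zero_right, smul_zero] at key
      exact mem_trans key (add_mem (cmp_mem_fst j' (by omega) hdκc) (zero_mem _))
    · -- (b) d p ∈ J
      have key : C.cd 2 (C.cmp 1 p' ι) =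
          C.cmp 2 (C.cd 2 p') ι + ((1 : ℤ).negOnePow : ℤ) • C.cmp 2 p' (C.cd 1 ι) :=
        cleib p' ι (by omega) (by omega) (by omega) (by omega) (by omega) (by omega)
      rw [E2, cmp_zero_left] at key
      have hmem : ((1 : ℤ).negOnePow : ℤ) • C.cmp 2 p' (C.cd 1 ι) ∈ J.I Cg X 2 :=
        (J.I Cg X 2).zsmul_mem (cmp_mem_snd p' (by omega) hdιc) _
      exact mem_trans key (add_mem (zero_mem _) hmem)
    · -- (c) d s ≡ f ∘ j
      have key1 : C.cd 0 (C.cmp (-1) ι' s') =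
          C.cmp 0 (C.cd 1 ι') s' + ((0 : ℤ).negOnePow : ℤ) • C.cmp 0 ι' (C.cd 0 s') :=
        cleib ι' s' (by omega) (by omega) (by omega) (by omega) (by omega) (by omega)
      rw [Int.negOnePow_zero, Units.val_one, one_smul, E3] at key1
      have A1 : C.cmp 0 (C.cmp 0 (C.cmp 0 ι f) κ) j' =
          C.cmp 0 ι (C.cmp 0 f (C.cmp 0 κ j')) := by
        rw [cassoc (a := 0) (b := 0) (k := 0) (C.cmp 0 ι f) κ j'
            (by omega) (by omega) (by omega) (by omega),
          cassoc (a := 0) (b := 0) (k := 0) ι f (C.cmp 0 κ j')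
            (by omega) (by omega) (by omega) (by omega)]
      rw [A1] at key1
      have A2 : C.cmp 0 ι' (C.cmp 0 ι (C.cmp 0 f (C.cmp 0 κ j'))) =
          C.cmp 0 (C.cmp 0 ι' ι) (C.cmp 0 f (C.cmp 0 κ j')) :=
        (cassoc ι' ι (C.cmp 0 f (C.cmp 0 κ j'))
          (by omega) (by omega) (by omega) (by omega)).symm
      rw [A2] at key1
      have S : C.cmp 0 (C.cmp 0 ι' ι) (C.cmp 0 f (C.cmp 0 κ j')) =
          C.cmp 0 (C.cmp 0 ι' ι - C.id X) (C.cmp 0 f (C.cmp 0 κ j')) +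
            C.cmp 0 f (C.cmp 0 κ j') := by
        rw [cmp_sub_left, cid_cmp _ _ (by omega), crc_refl]
        abel
      rw [S] at key1
      have key : C.cd 0 (C.cmp (-1) ι' s') - C.cmp 0 f (C.cmp 0 κ j') =
          C.cmp 0 (C.cd 1 ι') s' +
            C.cmp 0 (C.cmp 0 ι' ι - C.id X) (C.cmp 0 f (C.cmp 0 κ j')) := by
        rw [key1]; abel
      exact mem_trans key (add_mem (cmp_mem_fst s' (by omega) hdι'c)
        (cmp_mem_fst _ (by omega) hι'ιc))
    · -- (d) d t ≡ -(p ∘ f)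
      have key1 : C.cd 1 (C.cmp 0 t' κ') =
          C.cmp 1 (C.cd 1 t') κ' + ((0 : ℤ).negOnePow : ℤ) • C.cmp 1 t' (C.cd 1 κ') :=
        cleib t' κ' (by omega) (by omega) (by omega) (by omega) (by omega) (by omega)
      rw [Int.negOnePow_zero, Units.val_one, one_smul, E4, cmp_neg_left] at key1
      have B1 : C.cmp 1 p' (C.cmp 0 (C.cmp 0 ι f) κ) =
          C.cmp 1 (C.cmp 1 p' (C.cmp 0 ι f)) κ :=
        (cassoc p' (C.cmp 0 ι f) κ (by omega) (by omega) (by omega) (by omega)).symm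
      have B2 : C.cmp 1 p' (C.cmp 0 ι f) = C.cmp 1 (C.cmp 1 p' ι) f :=
        (cassoc p' ι f (by omega) (by omega) (by omega) (by omega)).symm
      rw [B1, B2] at key1
      have B3 : C.cmp 1 (C.cmp 1 (C.cmp 1 (C.cmp 1 p' ι) f) κ) κ' =
          C.cmp 1 (C.cmp 1 (C.cmp 1 p' ι) f) (C.cmp 0 κ κ') :=
        cassoc (C.cmp 1 (C.cmp 1 p' ι) f) κ κ' (by omega) (by omega) (by omega) (by omega)
      rw [B3] at key1
      have S2 : C.cmp 1 (C.cmp 1 (C.cmp 1 p' ι) f) (C.cmp 0 κ κ') =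
          C.cmp 1 (C.cmp 1 (C.cmp 1 p' ι) f) (C.cmp 0 κ κ' - C.id Y) +
            C.cmp 1 (C.cmp 1 p' ι) f := by
        rw [cmp_sub_right, cmp_id _ _ (by omega), crc_refl]
        abel
      rw [S2] at key1
      have key : C.cd 1 (C.cmp 0 t' κ') - (-(C.cmp 1 (C.cmp 1 p' ι) f)) =
          C.cmp 1 t' (C.cd 1 κ') +
            (-(C.cmp 1 (C.cmp 1 (C.cmp 1 p' ι) f) (C.cmp 0 κ κ' - C.id Y))) := by
        rw [key1]; abel
      exact mem_trans key (add_mem (cmp_mem_snd t' (by omega) hdκ'c)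
        (neg_mem (cmp_mem_snd _ (by omega) hκκ'c)))
    · -- (e) j ∘ p = 0
      have key : C.cmp 1 (C.cmp 0 κ j') (C.cmp 1 p' ι) = 0 := by
        rw [cassoc (a := 0) (b := 1) (k := 1) κ j' (C.cmp 1 p' ι)
            (by omega) (by omega) (by omega) (by omega),
          ← cassoc (a := 1) (b := 1) (k := 1) j' p' ι
            (by omega) (by omega) (by omega) (by omega),
          E5, cmp_zero_left, cmp_zero_right]
      exact mem_trans key (zero_mem _)
    · -- (f) s ∘ t = 0
      have key : C.cmp (-1) (C.cmp (-1) ι' s') (C.cmp 0 t' κ') = 0 := by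
        rw [cassoc (a := -1) (b := -1) (k := -1) ι' s' (C.cmp 0 t' κ')
            (by omega) (by omega) (by omega) (by omega),
          ← cassoc (a := -1) (b := 0) (k := -1) s' t' κ'
            (by omega) (by omega) (by omega) (by omega),
          E6, cmp_zero_left, cmp_zero_right]
      exact mem_trans key (zero_mem _)
    · -- (g) id ≡ p ∘ s + t ∘ j
      have D1 : C.cmp 0 (C.cmp 1 p' ι) (C.cmp (-1) ι' s') =
          C.cmp 0 p' (C.cmp (-1) ι (C.cmp (-1) ι' s')) :=
        cassoc p' ι (C.cmp (-1) ι' s') (by omega) (by omega) (by omega) (by omega)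
      have D2 : C.cmp (-1) ι (C.cmp (-1) ι' s') = C.cmp (-1) (C.cmp 0 ι ι') s' :=
        (cassoc ι ι' s' (by omega) (by omega) (by omega) (by omega)).symm
      have D3 : C.cmp 0 p' (C.cmp (-1) (C.cmp 0 ι ι') s') =
          C.cmp 0 (C.cmp 1 p' (C.cmp 0 ι ι')) s' :=
        (cassoc p' (C.cmp 0 ι ι') s' (by omega) (by omega) (by omega) (by omega)).symm
      have D4 : C.cmp 1 p' (C.cmp 0 ι ι') =
          C.cmp 1 p' (C.cmp 0 ι ι' - C.id X') + p' := by
        rw [cmp_sub_right, cmp_id _ _ (by omega), crc_refl]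
        abel
      have Sum1 : C.cmp 0 (C.cmp 1 p' ι) (C.cmp (-1) ι' s') =
          C.cmp 0 (C.cmp 1 p' (C.cmp 0 ι ι' - C.id X')) s' + C.cmp 0 p' s' := by
        rw [D1, D2, D3, D4, cmp_add_left]
      have F1 : C.cmp 0 (C.cmp 0 t' κ') (C.cmp 0 κ j') =
          C.cmp 0 t' (C.cmp 0 κ' (C.cmp 0 κ j')) :=
        cassoc t' κ' (C.cmp 0 κ j') (by omega) (by omega) (by omega) (by omega)
      have F2 : C.cmp 0 κ' (C.cmp 0 κ j') = C.cmp 0 (C.cmp 0 κ' κ) j' :=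
        (cassoc κ' κ j' (by omega) (by omega) (by omega) (by omega)).symm
      have F3 : C.cmp 0 t' (C.cmp 0 (C.cmp 0 κ' κ) j') =
          C.cmp 0 (C.cmp 0 t' (C.cmp 0 κ' κ)) j' :=
        (cassoc t' (C.cmp 0 κ' κ) j' (by omega) (by omega) (by omega) (by omega)).symm
      have F4 : C.cmp 0 t' (C.cmp 0 κ' κ) =
          C.cmp 0 t' (C.cmp 0 κ' κ - C.id Y') + t' := by
        rw [cmp_sub_right, cmp_id _ _ (by omega), crc_refl]
        abel
      have Sum2 : C.cmp 0 (C.cmp 0 t' κ') (C.cmp 0 κ j') =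
          C.cmp 0 (C.cmp 0 t' (C.cmp 0 κ' κ - C.id Y')) j' + C.cmp 0 t' j' := by
        rw [F1, F2, F3, F4, cmp_add_left]
      have key : C.id Cg -
          (C.cmp 0 (C.cmp 1 p' ι) (C.cmp (-1) ι' s') +
            C.cmp 0 (C.cmp 0 t' κ') (C.cmp 0 κ j')) =
          -(C.cmp 0 (C.cmp 1 p' (C.cmp 0 ι ι' - C.id X')) s' +
            C.cmp 0 (C.cmp 0 t' (C.cmp 0 κ' κ - C.id Y')) j') := by
        rw [Sum1, Sum2, E7]; abel
      exact mem_trans key (neg_mem (add_mem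
        (cmp_mem_fst s' (by omega) (cmp_mem_snd p' (by omega) hιι'c))
        (cmp_mem_fst j' (by omega) (cmp_mem_snd t' (by omega) hκ'κc))))
    · -- (h) id_Y ≡ j ∘ t
      have key : C.id Y - C.cmp 0 (C.cmp 0 κ j') (C.cmp 0 t' κ') =
          -(C.cmp 0 κ κ' - C.id Y) := by
        rw [cassoc (a := 0) (b := 0) (k := 0) κ j' (C.cmp 0 t' κ')
            (by omega) (by omega) (by omega) (by omega),
          ← cassoc (a := 0) (b := 0) (k := 0) j' t' κ'
            (by omega) (by omega) (by omega) (by omega),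
          ← E8, cid_cmp _ _ (by omega), crc_refl]
        abel
      exact mem_trans key (neg_mem hκκ'c)
    · -- (i) id_X ≡ s ∘ p
      have key : C.id X - C.cmp 0 (C.cmp (-1) ι' s') (C.cmp 1 p' ι) =
          -(C.cmp 0 ι' ι - C.id X) := by
        rw [cassoc (a := -1) (b := 0) (k := 0) ι' s' (C.cmp 1 p' ι)
            (by omega) (by omega) (by omega) (by omega),
          ← cassoc (a := 0) (b := 1) (k := 0) s' p' ι
            (by omega) (by omega) (by omega) (by omega),
          ← E9, cid_cmp _ _ (by omega), crc_refl]
        abel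
      exact mem_trans key (neg_mem hι'ιc)

end DGCat
end
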